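/- The 4-dimensional complex algebras A(α) with basis e1,e2,e3,e4 and nonzero products e1e1 = e2, e1e3 = e4, e2e1 = e3, e2e2 = α e4, e3e1 = −2e4 (for α ∈ ℂ) are pairwise non-isomorphic nilpotent CD-algebras: A(α) ≅ A(α') implies α = α'. -/

import Mathlib

/-!
Nilpotency: giving `e_i` weight `i`, the product adds weights, so every product of five or more
elements vanishes. Invariant: every `x ∈ A(α)` satisfies `(x x)(x x) = α · x((x x) x)`, and
`e₁((e₁ e₁) e₁) = e₄ ≠ 0`. An isomorphism `φ : A(α) ≅ A(α')` therefore sends `α • e₄` both to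
`α • φ e₄` and to `α' • φ e₄`, with `φ e₄ ≠ 0`.
-/

/-- The three degree-4 identities defining a CD-algebra. -/
def IsCD {A : Type*} [AddCommGroup A] (m : A → A → A) : Prop :=
  (∀ a b x y : A,
      m (m (m x y) a) b - m (m (m x y) b) a =
        m (m (m x a) b - m (m x b) a) y + m x (m (m y a) b - m (m y b) a)) ∧
  (∀ a b x y : A,
      m (m a (m x y)) b - m a (m (m x y) b) =
        m (m (m a x) b - m a (m x b)) y + m x (m (m a y) b - m a (m y b))) ∧
  (∀ a b x y : A,
      m a (m b (m x y)) - m b (m a (m x y)) =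
        m (m a (m b x) - m b (m a x)) y + m x (m a (m b y) - m b (m a y)))

/-- The CD-cocycle conditions for a map `θ : A × A → V`. -/
def IsCDCocycle {A V : Type*} [AddCommGroup A] [AddCommGroup V]
    (m : A → A → A) (θ : A → A → V) : Prop :=
  (∀ a b x y : A,
      θ (m (m x y) a) b - θ (m (m x y) b) a =
        θ (m (m x a) b - m (m x b) a) y + θ x (m (m y a) b - m (m y b) a)) ∧
  (∀ a b x y : A,
      θ (m a (m x y)) b - θ a (m (m x y) b) =
        θ (m (m a x) b - m a (m x b)) y + θ x (m (m a y) b - m a (m y b))) ∧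
  (∀ a b x y : A,
      θ a (m b (m x y)) - θ b (m a (m x y)) =
        θ (m a (m b x) - m b (m a x)) y + θ x (m a (m b y) - m b (m a y)))

/-- Evaluation of a nonassociative word in `A` under the multiplication `m`. -/
def magEval {A : Type*} (m : A → A → A) : FreeMagma A → A
  | FreeMagma.of a => a
  | FreeMagma.mul x y => m (magEval m x) (magEval m y)

/-- The number of letters of a nonassociative word. -/
def magLen {A : Type*} : FreeMagma A → ℕ
  | FreeMagma.of _ => 1
  | FreeMagma.mul x y => magLen x + magLen y

/-- An algebra is nilpotent iff all sufficiently long products vanish. -/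
def IsNilpotentMul {A : Type*} [AddCommGroup A] (m : A → A → A) : Prop :=
  ∃ n : ℕ, ∀ w : FreeMagma A, n ≤ magLen w → magEval m w = 0

/-- The family A(α): e1e1 = e2, e1e3 = e4, e2e1 = e3, e2e2 = αe4, e3e1 = -2e4. -/
noncomputable def mulC408 (a : ℂ) (u v : Fin 4 → ℂ) : Fin 4 → ℂ :=
  Pi.single (1 : Fin 4) (u 0 * v 0) + Pi.single (2 : Fin 4) (u 1 * v 0) +
    Pi.single (3 : Fin 4) (u 0 * v 2 + a * (u 1 * v 1) - 2 * (u 2 * v 0))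

section Coordinates

variable (a : ℂ) (u v : Fin 4 → ℂ)

@[simp] lemma mulC408_apply_zero : mulC408 a u v 0 = 0 := by
  simp [mulC408]

@[simp] lemma mulC408_apply_one : mulC408 a u v 1 = u 0 * v 0 := by
  simp [mulC408]

@[simp] lemma mulC408_apply_two : mulC408 a u v 2 = u 1 * v 0 := by
  simp [mulC408]

@[simp] lemma mulC408_apply_three :
    mulC408 a u v 3 = u 0 * v 2 + a * (u 1 * v 1) - 2 * (u 2 * v 0) := by
  simp [mulC408]

end Coordinates

lemma isCD_mulC408 (a : ℂ) : IsCD (mulC408 a) := by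
  refine ⟨?_, ?_, ?_⟩ <;> intro a b x y <;> funext i <;> fin_cases i <;>
    simp [mulC408] <;> ring

/-- The coordinate `i` carries weight `i + 1`; `WeightAtLeast k u` says that `u` has no
component of weight `< k`. -/
def WeightAtLeast (k : ℕ) (u : Fin 4 → ℂ) : Prop :=
  ∀ i : Fin 4, (i : ℕ) + 1 < k → u i = 0

lemma WeightAtLeast.mulC408 (a : ℂ) {j k : ℕ} {u v : Fin 4 → ℂ}
    (hu : WeightAtLeast j u) (hv : WeightAtLeast k v) :
    WeightAtLeast (j + k) (mulC408 a u v) := by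
  have monomial : ∀ p q : Fin 4, (p : ℕ) + 1 + ((q : ℕ) + 1) < j + k → u p * v q = 0 := by
    intro p q hpq
    rcases lt_or_ge ((p : ℕ) + 1) j with hp | hp
    · rw [hu p hp, zero_mul]
    · rw [hv q (by omega), mul_zero]
  intro i hi
  fin_cases i
  · exact mulC408_apply_zero a u v
  · simp only [Fin.mk_one, mulC408_apply_one, monomial 0 0 (by simpa using hi)]
  · simp only [Fin.reduceFinMk, mulC408_apply_two, monomial 1 0 (by simpa using hi)]
  · simp only [Fin.reduceFinMk, mulC408_apply_three, monomial 0 2 (by simpa using hi),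
      monomial 1 1 (by simpa using hi), monomial 2 0 (by simpa using hi)]
    ring

lemma weightAtLeast_magEval_mulC408 (a : ℂ) (w : FreeMagma (Fin 4 → ℂ)) :
    WeightAtLeast (magLen w) (magEval (mulC408 a) w) := by
  induction w using FreeMagma.rec with
  | of u => exact fun i hi => absurd hi (by simp [magLen])
  | mul x y ihx ihy => exact ihx.mulC408 a ihy

lemma isNilpotentMul_mulC408 (a : ℂ) : IsNilpotentMul (mulC408 a) := by
  refine ⟨5, fun w hw => funext fun i => ?_⟩
  exact weightAtLeast_magEval_mulC408 a w i (by omega)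

lemma mulC408_sq_mul_sq (a : ℂ) (x : Fin 4 → ℂ) :
    mulC408 a (mulC408 a x x) (mulC408 a x x) =
      a • mulC408 a x (mulC408 a (mulC408 a x x) x) := by
  funext i
  fin_cases i <;>
    simp only [Fin.zero_eta, Fin.mk_one, Fin.reduceFinMk, Pi.smul_apply, smul_eq_mul,
      mulC408_apply_zero, mulC408_apply_one, mulC408_apply_two, mulC408_apply_three] <;>
    ring

lemma mulC408_single_zero_pow_four_apply_three (a : ℂ) :
    mulC408 a (Pi.single 0 1) (mulC408 a (mulC408 a (Pi.single 0 1) (Pi.single 0 1))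
      (Pi.single 0 1)) 3 = 1 := by
  simp

/-- The algebras A(α) are pairwise non-isomorphic nilpotent CD-algebras. -/
theorem C408_nilpotent_CD_pairwise_noniso :
    (∀ a : ℂ, IsCD (mulC408 a) ∧ IsNilpotentMul (mulC408 a)) ∧
      ∀ a a' : ℂ,
        (∃ φ : (Fin 4 → ℂ) ≃ₗ[ℂ] (Fin 4 → ℂ),
          ∀ u v : Fin 4 → ℂ, φ (mulC408 a u v) = mulC408 a' (φ u) (φ v)) → a = a' := by
  refine ⟨fun a => ⟨isCD_mulC408 a, isNilpotentMul_mulC408 a⟩, ?_⟩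
  rintro a a' ⟨φ, hφ⟩
  set e₁ : Fin 4 → ℂ := Pi.single 0 1
  set w := mulC408 a e₁ (mulC408 a (mulC408 a e₁ e₁) e₁)
  have hw3 : w 3 = 1 := mulC408_single_zero_pow_four_apply_three a
  have hw : w ≠ 0 := fun h => by simp [h] at hw3
  have hφw : φ w = mulC408 a' (φ e₁) (mulC408 a' (mulC408 a' (φ e₁) (φ e₁)) (φ e₁)) := by
    simp only [w, hφ]
  have key : a • φ w = a' • φ w := by
    rw [← map_smul, ← mulC408_sq_mul_sq, hφ, hφ, hφw, mulC408_sq_mul_sq]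
  exact smul_left_injective ℂ (φ.map_ne_zero_iff.mpr hw) key
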